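/- For all indices 1 ≤ i < j ≤ n+1, every nonterminal A of G_e, and every u: (A, u) belongs to M(i,j) if and only if u ≤ R, A ⇒* s_i^{j−1} in G_e with a derivation of score u, and there is no u' < u such that A ⇒* s_i^{j−1} in G_e with a derivation of score u'; i.e., M(i,j) consists exactly of the pairs (A,u) where u is the minimum derivation score of s_i^{j−1} from A in G_e and u ≤ R. -/

import Mathlib

/-- A scored production of a grammar: a left-hand-side nonterminal, a right-hand-side
string of nonterminals and terminals, and a score (edit cost). -/
structure ScoredProd (N : Type*) (T : Type*) where
  lhs : N
  rhs : List (N ⊕ T)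
  score : ℕ

/-- `ScoredDerives P u v c` : from the sentential form `u` one can derive the sentential
form `v` using productions from `P` whose scores sum to `c`. -/
inductive ScoredDerives {N T : Type*} (P : Set (ScoredProd N T)) :
    List (N ⊕ T) → List (N ⊕ T) → ℕ → Prop
  | refl (w : List (N ⊕ T)) : ScoredDerives P w w 0
  | step {u l r : List (N ⊕ T)} {p : ScoredProd N T} {c : ℕ} :
      ScoredDerives P u (l ++ [Sum.inl p.lhs] ++ r) c → p ∈ P →
      ScoredDerives P u (l ++ p.rhs ++ r) (c + p.score)

/-- A context-free grammar in Chomsky normal form: binary rules `A → BC`,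
terminal rules `A → a`, and possibly the rule `S → ε` (recorded by `eps`). -/
structure CNF (N : Type*) (T : Type*) where
  start : N
  bin : Set (N × N × N)
  term : Set (N × T)
  eps : Prop

/-- The productions of the CNF grammar `G`, all of score `0`. -/
def CNF.prods {N T : Type*} (G : CNF N T) : Set (ScoredProd N T) :=
  {p | (∃ A B C, (A, B, C) ∈ G.bin ∧ p = ⟨A, [Sum.inl B, Sum.inl C], 0⟩) ∨
       (∃ A a, (A, a) ∈ G.term ∧ p = ⟨A, [Sum.inr a], 0⟩) ∨
       (G.eps ∧ p = ⟨G.start, [], 0⟩)}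

/-- Lift a production of `G` to the augmented grammar `G_e`, whose nonterminals are
`N ⊕ Unit` (with `Sum.inr ()` playing the role of the fresh nonterminal `I`). -/
def liftProd {N T : Type*} (p : ScoredProd N T) : ScoredProd (N ⊕ Unit) T :=
  ⟨Sum.inl p.lhs, p.rhs.map (Sum.map Sum.inl id), p.score⟩

/-- The productions of the augmented grammar `G_e`: the original productions of `G`
(score 0), elementary substitution rules `A → y` of score 1 (for `A` having some
terminal rule and `y` with `A → y ∉ P`), elementary insertion rules `I → x` of score 1,
rules `A → IA`, `A → AI` of score 0, `I → II` of score 0, and elementary deletion rules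
`A → ε` of score 1 for every terminal rule `A → x` of `G`. -/
def CNF.augProds {N T : Type*} (G : CNF N T) : Set (ScoredProd (N ⊕ Unit) T) :=
  (liftProd '' G.prods) ∪
  {p | ∃ A y, (∃ x, (A, x) ∈ G.term) ∧ (A, y) ∉ G.term ∧
        p = ⟨Sum.inl A, [Sum.inr y], 1⟩} ∪
  {p | ∃ x, p = ⟨Sum.inr (), [Sum.inr x], 1⟩} ∪
  {p | ∃ A : N, p = ⟨Sum.inl A, [Sum.inl (Sum.inr ()), Sum.inl (Sum.inl A)], 0⟩ ∨
                p = ⟨Sum.inl A, [Sum.inl (Sum.inl A), Sum.inl (Sum.inr ())], 0⟩} ∪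
  {(⟨Sum.inr (), [Sum.inl (Sum.inr ()), Sum.inl (Sum.inr ())], 0⟩ : ScoredProd (N ⊕ Unit) T)} ∪
  {p | ∃ A x, (A, x) ∈ G.term ∧ p = ⟨Sum.inl A, [], 1⟩}

/-- `A ⇒* s` in the grammar `G`. -/
def CNF.Derives {N T : Type*} (G : CNF N T) (A : N) (s : List T) : Prop :=
  ∃ u, ScoredDerives G.prods [Sum.inl A] (s.map Sum.inr) u

/-- The language of `G`. -/
def CNF.lang {N T : Type*} (G : CNF N T) : Set (List T) := {s | G.Derives G.start s}

/-- `A ⇒* s` in the augmented grammar `G_e` with a derivation of score exactly `u`. -/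
def CNF.augDerives {N T : Type*} (G : CNF N T) (A : N ⊕ Unit) (s : List T) (u : ℕ) : Prop :=
  ScoredDerives G.augProds [Sum.inl A] (s.map Sum.inr) u

/-- Cost structure for the Levenshtein distance (as in the former Mathlib file
`Mathlib/Data/List/EditDistance/Defs.lean`, since removed). -/
structure Levenshtein.Cost (α β δ : Type*) where
  delete : α → δ
  insert : β → δ
  substitute : α → β → δ

/-- The default unit cost. -/
def Levenshtein.defaultCost {α : Type*} [DecidableEq α] : Levenshtein.Cost α α ℕ where
  delete _ := 1
  insert _ := 1
  substitute a b := if a = b then 0 else 1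

/-- Auxiliary step of the Levenshtein dynamic programme (former Mathlib definition). -/
def Levenshtein.impl {α β δ : Type*} [AddZeroClass δ] [Min δ] (C : Levenshtein.Cost α β δ)
    (xs : List α) (y : β) (d : {r : List δ // 0 < r.length}) : {r : List δ // 0 < r.length} :=
  let ⟨ds, w⟩ := d
  xs.zip (ds.zip ds.tail) |>.foldr
    (init := ⟨[ds.getLast (List.length_pos_iff.mp w) + C.insert y], by simp⟩)
    (fun ⟨x, d₀, d₁⟩ ⟨r, w⟩ =>
      ⟨min (C.delete x + r[0]) (min (C.insert y + d₀) (C.substitute x y + d₁)) :: r, by simp⟩)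

/-- Levenshtein distances of all suffixes of `xs` to `ys` (former Mathlib definition). -/
def suffixLevenshtein {α β δ : Type*} [AddZeroClass δ] [Min δ] (C : Levenshtein.Cost α β δ)
    (xs : List α) (ys : List β) : {r : List δ // 0 < r.length} :=
  ys.foldr
    (Levenshtein.impl C xs)
    (xs.foldr (init := ⟨[0], by simp⟩) (fun a ⟨r, w⟩ => ⟨(C.delete a + r[0]) :: r, by simp⟩))

/-- The Levenshtein distance (former Mathlib definition). -/
def levenshtein {α β δ : Type*} [AddZeroClass δ] [Min δ] (C : Levenshtein.Cost α β δ)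
    (xs : List α) (ys : List β) : δ :=
  let ⟨r, _⟩ := suffixLevenshtein C xs ys
  r[0]

/-- The standard (unit-cost) string edit distance. -/
def editDist {T : Type*} [DecidableEq T] (s t : List T) : ℕ :=
  levenshtein Levenshtein.defaultCost s t

/-- The language edit distance `d_G(G,s) = min_{z ∈ L(G)} d_ed(s,z)`. -/
noncomputable def dG {N T : Type*} [DecidableEq T] (G : CNF N T) (s : List T) : ℕ :=
  sInf {d | ∃ z ∈ G.lang, editDist s z = d}


/-- The substring `s_i^{j-1} = s_i s_{i+1} ... s_{j-1}` (1-based indices). -/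
def subStr {T : Type*} (s : List T) (i j : ℕ) : List T := (s.drop (i - 1)).take (j - i)

/-- The candidate entries generated by the construction of the matrix `M`:
(base) `(A, σ) ∈ M(i, i+1)` whenever `A → s_i` is a production of `G_e` of score `σ`;
(combination) if `(B,u) ∈ M(i,j)`, `(C,v) ∈ M(j,k)` and `A → BC` is a production of `G_e`,
then `(A, u+v)` is a candidate for `M(i,k)`;
(ε-absorption) if `(B,u) ∈ M(i,j)`, `A → CB` (resp. `A → BC`) is a production of `G_e`, and
`C ⇒* ε` in `G_e` with a derivation of score `v`, then `(A, u+v)` is a candidate for `M(i,j)`. -/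
inductive Cand {N T : Type*} (G : CNF N T) (s : List T) :
    ℕ → ℕ → (N ⊕ Unit) → ℕ → Prop
  | base {i : ℕ} {A : N ⊕ Unit} {σ : ℕ} {a : T} :
      1 ≤ i → i ≤ s.length → s[i - 1]? = some a →
      (⟨A, [Sum.inr a], σ⟩ : ScoredProd (N ⊕ Unit) T) ∈ G.augProds →
      Cand G s i (i + 1) A σ
  | comb {i j k : ℕ} {A B C : N ⊕ Unit} {u v sc : ℕ} :
      Cand G s i j B u → Cand G s j k C v →
      (⟨A, [Sum.inl B, Sum.inl C], sc⟩ : ScoredProd (N ⊕ Unit) T) ∈ G.augProds →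
      Cand G s i k A (u + v)
  | epsL {i j : ℕ} {A B C : N ⊕ Unit} {u v sc : ℕ} :
      Cand G s i j B u →
      (⟨A, [Sum.inl C, Sum.inl B], sc⟩ : ScoredProd (N ⊕ Unit) T) ∈ G.augProds →
      ScoredDerives G.augProds [Sum.inl C] [] v →
      Cand G s i j A (u + v)
  | epsR {i j : ℕ} {A B C : N ⊕ Unit} {u v sc : ℕ} :
      Cand G s i j B u →
      (⟨A, [Sum.inl B, Sum.inl C], sc⟩ : ScoredProd (N ⊕ Unit) T) ∈ G.augProds →
      ScoredDerives G.augProds [Sum.inl C] [] v →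
      Cand G s i j A (u + v)

/-- The entry `M(i,j)` of the matrix `M`: among all candidates, for each nonterminal only
the pair of minimum score is kept, and pairs of score exceeding `R` are discarded. -/
def Mmat {N T : Type*} (G : CNF N T) (s : List T) (R i j : ℕ) : Set ((N ⊕ Unit) × ℕ) :=
  {q | Cand G s i j q.1 q.2 ∧ q.2 ≤ R ∧ ∀ v, Cand G s i j q.1 v → q.2 ≤ v}

/-! Read backwards, a derivation of a terminal word in a grammar whose right-hand sides are `ε`,
`a` or `BC` is a parse tree, and parse trees of substrings of `s` are exactly what the rules
generating `M` build: a binary node with two nonempty yields is a combination, one with an empty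
side an ε-absorption (binary rules of `G_e` cost nothing). So the candidates for `M(i,j)` of
score `u` are precisely the derivations of `s_i^{j-1}` of score `u`, and keeping the minimal
candidate keeps the minimal derivation score. -/

section Derivations

variable {N T : Type*} {P : Set (ScoredProd N T)}

theorem ScoredDerives.trans {a b c : List (N ⊕ T)} {u v : ℕ}
    (h₁ : ScoredDerives P a b u) (h₂ : ScoredDerives P b c v) :
    ScoredDerives P a c (u + v) := by
  induction h₂ with
  | refl => exact h₁
  | step _ hp ih => rw [← Nat.add_assoc]; exact ih.step hp

theorem ScoredDerives.single {p : ScoredProd N T} (hp : p ∈ P) :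
    ScoredDerives P [Sum.inl p.lhs] p.rhs p.score := by
  simpa using (ScoredDerives.refl (P := P) [Sum.inl p.lhs]).step (l := []) (r := []) hp

theorem ScoredDerives.append_context {a b : List (N ⊕ T)} {u : ℕ}
    (h : ScoredDerives P a b u) (x y : List (N ⊕ T)) :
    ScoredDerives P (x ++ a ++ y) (x ++ b ++ y) u := by
  induction h with
  | refl => exact .refl _
  | @step l r p _ _ hp ih =>
    simpa using ScoredDerives.step (l := x ++ l) (r := r ++ y) (by simpa using ih) hp

theorem ScoredDerives.append {a b a' b' : List (N ⊕ T)} {u v : ℕ}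
    (h : ScoredDerives P a b u) (h' : ScoredDerives P a' b' v) :
    ScoredDerives P (a ++ a') (b ++ b') (u + v) := by
  have h₁ := h.append_context [] a'
  have h₂ := h'.append_context b []
  simp only [List.nil_append, List.append_nil] at h₁ h₂
  exact h₁.trans h₂

end Derivations

def IsCNFShaped {N T : Type*} (P : Set (ScoredProd N T)) : Prop :=
  ∀ p ∈ P, p.rhs = [] ∨ (∃ a, p.rhs = [Sum.inr a]) ∨ ∃ B C, p.rhs = [Sum.inl B, Sum.inl C]

inductive Yields {N T : Type*} (P : Set (ScoredProd N T)) : N → List T → ℕ → Prop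
  | empty {A : N} {σ : ℕ} : ⟨A, [], σ⟩ ∈ P → Yields P A [] σ
  | leaf {A : N} {a : T} {σ : ℕ} : ⟨A, [Sum.inr a], σ⟩ ∈ P → Yields P A [a] σ
  | node {A B C : N} {σ c₁ c₂ : ℕ} {w₁ w₂ : List T} :
      ⟨A, [Sum.inl B, Sum.inl C], σ⟩ ∈ P → Yields P B w₁ c₁ → Yields P C w₂ c₂ →
      Yields P A (w₁ ++ w₂) (σ + c₁ + c₂)

inductive FormYields {N T : Type*} (P : Set (ScoredProd N T)) :
    List (N ⊕ T) → List T → ℕ → Prop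
  | nil : FormYields P [] [] 0
  | terminal {a : T} {u : List (N ⊕ T)} {w : List T} {c : ℕ} :
      FormYields P u w c → FormYields P (Sum.inr a :: u) (a :: w) c
  | nonterminal {A : N} {u : List (N ⊕ T)} {w₁ w₂ : List T} {c₁ c₂ : ℕ} :
      Yields P A w₁ c₁ → FormYields P u w₂ c₂ → FormYields P (Sum.inl A :: u) (w₁ ++ w₂) (c₁ + c₂)

section ParseTrees

variable {N T : Type*} {P : Set (ScoredProd N T)}

theorem Yields.scoredDerives {A : N} {w : List T} {c : ℕ} (h : Yields P A w c) :
    ScoredDerives P [Sum.inl A] (w.map Sum.inr) c := by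
  induction h with
  | empty hp => exact ScoredDerives.single hp
  | leaf hp => exact ScoredDerives.single hp
  | node hp _ _ ih₁ ih₂ =>
    rw [List.map_append, Nat.add_assoc]
    exact (ScoredDerives.single hp).trans (ih₁.append (a := [_]) (a' := [_]) ih₂)

theorem FormYields.append {u v : List (N ⊕ T)} {w w' : List T} {c c' : ℕ}
    (h : FormYields P u w c) (h' : FormYields P v w' c') :
    FormYields P (u ++ v) (w ++ w') (c + c') := by
  induction h with
  | nil => simpa using h'
  | terminal _ ih => exact ih.terminal
  | nonterminal hA _ ih =>
    rw [List.append_assoc, Nat.add_assoc]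
    exact FormYields.nonterminal hA ih

theorem FormYields.of_append {u v : List (N ⊕ T)} {w : List T} {c : ℕ}
    (h : FormYields P (u ++ v) w c) :
    ∃ w₁ w₂ c₁ c₂, w = w₁ ++ w₂ ∧ c = c₁ + c₂ ∧ FormYields P u w₁ c₁ ∧ FormYields P v w₂ c₂ := by
  induction u generalizing w c with
  | nil => exact ⟨[], w, 0, c, rfl, by omega, .nil, h⟩
  | cons X u ih =>
    rcases h with _ | @⟨a, _, w, _, h⟩ | @⟨A, _, w₀, w, c₀, c, hA, h⟩
    · obtain ⟨w₁, w₂, c₁, c₂, rfl, rfl, h₁, h₂⟩ := ih h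
      exact ⟨a :: w₁, w₂, c₁, c₂, rfl, rfl, h₁.terminal, h₂⟩
    · obtain ⟨w₁, w₂, c₁, c₂, rfl, rfl, h₁, h₂⟩ := ih h
      exact ⟨w₀ ++ w₁, w₂, c₀ + c₁, c₂, by simp, by omega, FormYields.nonterminal hA h₁, h₂⟩

theorem FormYields.map_inr (w : List T) : FormYields P (w.map Sum.inr) w 0 := by
  induction w with
  | nil => exact .nil
  | cons a w ih => exact ih.terminal

theorem formYields_singleton_iff {A : N} {w : List T} {c : ℕ} :
    FormYields P [Sum.inl A] w c ↔ Yields P A w c := by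
  refine ⟨fun h => ?_, fun h => by simpa using FormYields.nonterminal h .nil⟩
  rcases h with _ | _ | ⟨hA, ⟨⟩⟩
  simpa using hA

theorem FormYields.yields_lhs (hP : IsCNFShaped P) {p : ScoredProd N T} (hp : p ∈ P)
    {w : List T} {c : ℕ} (h : FormYields P p.rhs w c) : Yields P p.lhs w (p.score + c) := by
  obtain ⟨A, rhs, σ⟩ := p
  rcases hP _ hp with rfl | ⟨a, rfl⟩ | ⟨B, C, rfl⟩
  · rcases h with _ | _ | _
    exact .empty hp
  · rcases h with _ | ⟨⟨⟩⟩ | _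
    exact .leaf hp
  · rcases h with _ | _ | ⟨hB, _ | _ | ⟨hC, ⟨⟩⟩⟩
    simpa [Nat.add_assoc] using Yields.node hp hB hC

theorem FormYields.of_scoredDerives (hP : IsCNFShaped P) {u v : List (N ⊕ T)} {c : ℕ}
    (hd : ScoredDerives P u v c) {w : List T} {c' : ℕ} (h : FormYields P v w c') :
    FormYields P u w (c + c') := by
  induction hd generalizing w c' with
  | refl => simpa using h
  | @step l r p c _ hp ih =>
    obtain ⟨w₀, w₃, c₀, c₃, rfl, rfl, h₀, h₃⟩ := h.of_append
    obtain ⟨w₁, w₂, c₁, c₂, rfl, rfl, h₁, h₂⟩ := h₀.of_append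
    have hA := formYields_singleton_iff.mpr (h₂.yields_lhs hP hp)
    convert ih ((h₁.append hA).append h₃) using 1
    omega

theorem scoredDerives_iff_yields (hP : IsCNFShaped P) {A : N} {w : List T} {c : ℕ} :
    ScoredDerives P [Sum.inl A] (w.map Sum.inr) c ↔ Yields P A w c :=
  ⟨fun h => formYields_singleton_iff.mp (FormYields.of_scoredDerives hP h (.map_inr w)),
    Yields.scoredDerives⟩

end ParseTrees

section AugmentedGrammar

variable {N T : Type*} {G : CNF N T}

theorem CNF.augProds_isCNFShaped (G : CNF N T) : IsCNFShaped G.augProds := by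
  rintro p (((((⟨q, hq, rfl⟩ | ⟨A, y, -, -, rfl⟩) | ⟨x, rfl⟩) | ⟨A, rfl | rfl⟩) | rfl) |
    ⟨A, x, -, rfl⟩)
  · rcases hq with ⟨A, B, C, -, rfl⟩ | ⟨A, a, -, rfl⟩ | ⟨-, rfl⟩
    exacts [.inr (.inr ⟨_, _, rfl⟩), .inr (.inl ⟨a, rfl⟩), .inl rfl]
  all_goals simp

theorem CNF.score_eq_zero_of_binary_mem_augProds {A B C : N ⊕ Unit} {σ : ℕ}
    (hp : (⟨A, [Sum.inl B, Sum.inl C], σ⟩ : ScoredProd (N ⊕ Unit) T) ∈ G.augProds) :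
    σ = 0 := by
  rcases hp with (((((⟨q, hq, he⟩ | ⟨_, _, -, -, he⟩) | ⟨_, he⟩) | ⟨_, he | he⟩) | he) |
    ⟨_, _, -, he⟩)
  · rcases hq with ⟨_, _, _, -, rfl⟩ | ⟨_, _, -, rfl⟩ | ⟨-, rfl⟩ <;> simp_all [liftProd]
  all_goals simp_all

end AugmentedGrammar

section Substrings

variable {T : Type*} {s : List T} {i j k : ℕ}

theorem length_subStr (hi : 1 ≤ i) (hj : j ≤ s.length + 1) : (subStr s i j).length = j - i := by
  simp only [subStr, List.length_take, List.length_drop]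
  omega

theorem subStr_succ (s : List T) (i : ℕ) : subStr s i (i + 1) = s[i - 1]?.toList := by
  simp [subStr, List.take_one]

theorem subStr_append_subStr (hi : 1 ≤ i) (hij : i ≤ j) (hjk : j ≤ k) :
    subStr s i j ++ subStr s j k = subStr s i k := by
  rw [subStr, subStr, subStr, show k - i = (j - i) + (k - j) by omega, List.take_add,
    List.drop_drop, show i - 1 + (j - i) = j - 1 by omega]

theorem eq_subStr_of_append_eq_subStr {w₁ w₂ : List T} (hi : 1 ≤ i) (hij : i ≤ j)
    (hj : j ≤ s.length + 1) (h : w₁ ++ w₂ = subStr s i j) :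
    w₁ = subStr s i (i + w₁.length) ∧ w₂ = subStr s (i + w₁.length) j := by
  have hlen : w₁.length + w₂.length = j - i := by
    rw [← List.length_append, h, length_subStr hi hj]
  refine List.append_inj (h.trans (subStr_append_subStr hi (by omega) (by omega)).symm) ?_
  rw [length_subStr hi (by omega)]
  omega

end Substrings

section Candidates

variable {N T : Type*} {G : CNF N T} {s : List T}

theorem Cand.one_le_and_lt {i j : ℕ} {A : N ⊕ Unit} {u : ℕ} (h : Cand G s i j A u) :
    1 ≤ i ∧ i < j := by
  induction h <;> omega

theorem Cand.yields {i j : ℕ} {A : N ⊕ Unit} {u : ℕ} (h : Cand G s i j A u) :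
    Yields G.augProds A (subStr s i j) u := by
  have hP := G.augProds_isCNFShaped
  induction h with
  | base _ _ ha hp => simpa [subStr_succ, ha] using Yields.leaf hp
  | comb h₁ h₂ hp ih₁ ih₂ =>
    obtain ⟨hi, hij⟩ := h₁.one_le_and_lt
    obtain ⟨-, hjk⟩ := h₂.one_le_and_lt
    rw [← subStr_append_subStr hi hij.le hjk.le]
    simpa [CNF.score_eq_zero_of_binary_mem_augProds hp] using Yields.node hp ih₁ ih₂
  | epsL _ hp hε ih =>
    have hC := (scoredDerives_iff_yields hP (w := [])).mp hε
    simpa [CNF.score_eq_zero_of_binary_mem_augProds hp, Nat.add_comm] using Yields.node hp hC ih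
  | epsR _ hp hε ih =>
    have hC := (scoredDerives_iff_yields hP (w := [])).mp hε
    simpa [CNF.score_eq_zero_of_binary_mem_augProds hp] using Yields.node hp ih hC

theorem Yields.cand {A : N ⊕ Unit} {w : List T} {c : ℕ}
    (h : Yields G.augProds A w c) {i j : ℕ} (hi : 1 ≤ i) (hij : i < j)
    (hj : j ≤ s.length + 1) (hw : w = subStr s i j) : Cand G s i j A c := by
  induction h generalizing i j with
  | empty _ =>
    have := length_subStr (s := s) hi hj
    rw [← hw, List.length_nil] at this
    omega
  | leaf hp =>
    have hlen := length_subStr (s := s) hi hj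
    rw [← hw, List.length_singleton] at hlen
    obtain rfl : j = i + 1 := by omega
    rw [subStr_succ, eq_comm, Option.toList_eq_singleton_iff] at hw
    exact .base hi (by omega) hw hp
  | @node A B C σ c₁ c₂ w₁ w₂ hp hB hC ihB ihC =>
    obtain rfl := CNF.score_eq_zero_of_binary_mem_augProds hp
    obtain rfl | hw₁ := eq_or_ne w₁ []
    · have hε : ScoredDerives G.augProds [Sum.inl B] [] c₁ := by simpa using hB.scoredDerives
      simpa [Nat.add_comm] using Cand.epsL (ihC hi hij hj hw) hp hε
    obtain rfl | hw₂ := eq_or_ne w₂ []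
    · have hε : ScoredDerives G.augProds [Sum.inl C] [] c₂ := by simpa using hC.scoredDerives
      simpa using Cand.epsR (ihB hi hij hj (by simpa using hw)) hp hε
    have hlen : w₁.length + w₂.length = j - i := by
      rw [← List.length_append, hw, length_subStr hi hj]
    have := List.length_pos_iff.mpr hw₁
    have := List.length_pos_iff.mpr hw₂
    obtain ⟨h₁, h₂⟩ := eq_subStr_of_append_eq_subStr hi hij.le hj hw
    simpa using Cand.comb (ihB hi (by omega) (by omega) h₁) (ihC (by omega) (by omega) hj h₂) hp

theorem cand_iff_augDerives {i j : ℕ} (hi : 1 ≤ i) (hij : i < j) (hj : j ≤ s.length + 1)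
    {A : N ⊕ Unit} {c : ℕ} : Cand G s i j A c ↔ G.augDerives A (subStr s i j) c := by
  rw [CNF.augDerives, scoredDerives_iff_yields G.augProds_isCNFShaped]
  exact ⟨Cand.yields, fun h => h.cand hi hij hj rfl⟩

end Candidates

theorem Mmat_mem_iff_min_score_general {N T : Type*}
    (G : CNF N T) (s : List T) (R : ℕ)
    (i j : ℕ) (hi : 1 ≤ i) (hij : i < j) (hj : j ≤ s.length + 1)
    (A : N ⊕ Unit) (u : ℕ) :
    (A, u) ∈ Mmat G s R i j ↔
      (u ≤ R ∧ G.augDerives A (subStr s i j) u ∧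
        ∀ u' < u, ¬ G.augDerives A (subStr s i j) u') := by
  simp only [Mmat, Set.mem_ofPred_eq, cand_iff_augDerives hi hij hj]
  constructor
  · rintro ⟨hd, hR, hleast⟩
    exact ⟨hR, hd, fun v hvu hv => (hleast v hv).not_gt hvu⟩
  · rintro ⟨hR, hd, hmin⟩
    exact ⟨hd, hR, fun v hv => not_lt.mp fun hvu => hmin v hvu hv⟩

/-- For all `1 ≤ i < j ≤ n+1`, every nonterminal `A` of `G_e` and every `u`:
`(A, u) ∈ M(i,j)` iff `u ≤ R`, `A ⇒* s_i^{j-1}` in `G_e` with a derivation of score `u`,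
and there is no `u' < u` with a derivation `A ⇒* s_i^{j-1}` of score `u'` in `G_e`. -/
theorem Mmat_mem_iff_min_score {N T : Type*} [DecidableEq T]
    (G : CNF N T) (hne : G.lang.Nonempty) (s : List T) (R : ℕ) (hR : 1 ≤ R)
    (i j : ℕ) (hi : 1 ≤ i) (hij : i < j) (hj : j ≤ s.length + 1)
    (A : N ⊕ Unit) (u : ℕ) :
    (A, u) ∈ Mmat G s R i j ↔
      (u ≤ R ∧ G.augDerives A (subStr s i j) u ∧
        ∀ u' < u, ¬ G.augDerives A (subStr s i j) u') :=
  Mmat_mem_iff_min_score_general G s R i j hi hij hj A u
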